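/- For each n ≥ 2 let p_n, q_n ∈ (0,1), let the prior on Θ_n be uniform, and let θ_n ∈ Θ_n. If n·ρ(p_n,q_n)^{n/2} → 0 as n → ∞, then P_{θ_n} Π({θ_n} | X^n) → 1, i.e. the posterior recovers the true community assignment exactly. -/

import Mathlib

open Finset Real Filter

/-!
Posterior masses sum to one, so `1 - P_θ Π({θ} | X)` is the sum over `η ≠ θ` of
`P_θ Π({η} | X)`, and each summand is at most the Hellinger affinity
`∑ₓ √(p_θ(x) p_η(x)) = ρ ^ |D(θ, η)|`, where `D(θ, η)` is the set of edges whose within/between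
status differs under `θ` and `η`. It contains every edge across the cut between the `h` vertices
where `θ` and `η` disagree and the other `n - h`, so `|D| ≥ h (n - h) ≥ n k / 2` with
`k = min h (n - h)`. At most `C(n, h) ≤ n ^ k` assignments lie at Hamming distance `h` from `θ`,
and the labelling constraints of `Θ_n` force `1 ≤ h ≤ n - 1`; hence the sum is at most
`∑ₕ (n ρ^{n/2}) ^ min h (n - h) ≤ 4 n ρ^{n/2}` as soon as `n ρ^{n/2} ≤ 1/2`.
-/

/-- The set of potential edges of an `n`-vertex graph: pairs `(i,j)` with `i < j`. -/
abbrev Edge (n : ℕ) := {e : Fin n × Fin n // e.1 < e.2}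

/-- An observed graph: an edge indicator for each potential edge. -/
abbrev ObsGraph (n : ℕ) := Edge n → Bool

/-- Edge probability under assignment `θ`: `p` within communities, `q` between. -/
noncomputable def edgeProb {n : ℕ} (p q : ℝ) (θ : Fin n → Bool) (e : Edge n) : ℝ :=
  if θ e.val.1 = θ e.val.2 then p else q

/-- Probability mass function of the observed graph under `θ`. -/
noncomputable def graphPMF {n : ℕ} (p q : ℝ) (θ : Fin n → Bool) (x : ObsGraph n) : ℝ :=
  ∏ e : Edge n, if x e then edgeProb p q θ e else 1 - edgeProb p q θ e

/-- Hellinger affinity of Bernoulli parameters. -/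
noncomputable def rho (p q : ℝ) : ℝ := Real.sqrt (p * q) + Real.sqrt ((1 - p) * (1 - q))

/-- Edges whose probability changes from `p` to `q` when replacing `θ` by `η`. -/
def D1 {n : ℕ} (θ η : Fin n → Bool) : Finset (Fin n × Fin n) :=
  Finset.univ.filter fun e => e.1 < e.2 ∧ θ e.1 = θ e.2 ∧ η e.1 ≠ η e.2

/-- Edges whose probability changes from `q` to `p` when replacing `θ` by `η`. -/
def D2 {n : ℕ} (θ η : Fin n → Bool) : Finset (Fin n × Fin n) :=
  Finset.univ.filter fun e => e.1 < e.2 ∧ θ e.1 ≠ θ e.2 ∧ η e.1 = η e.2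

/-- Hamming distance. -/
def hdist {n : ℕ} (θ η : Fin n → Bool) : ℕ := (Finset.univ.filter fun i => θ i ≠ η i).card

/-- The metric `k(θ,η) = h(θ,η) ∧ (n - h(θ,η))`. -/
def kdist {n : ℕ} (θ η : Fin n → Bool) : ℕ := min (hdist θ η) (n - hdist θ η)

/-- Size of the smallest community. -/
def countOnes {n : ℕ} (θ : Fin n → Bool) : ℕ := (Finset.univ.filter fun i => θ i = true).card

/-- The parameter space `Θ_n`. -/
def Theta (n : ℕ) : Finset (Fin n → Bool) :=
  Finset.univ.filter fun θ => 2 * countOnes θ ≤ n ∧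
    ∀ i : Fin n, 2 * countOnes θ = n → (i : ℕ) = 0 → θ i = false

/-- Posterior mass of `A ⊆ Θ_n` given data `x`, under prior mass function `π`. -/
noncomputable def postMass {n : ℕ} (p q : ℝ) (pri : (Fin n → Bool) → ℝ)
    (A : Finset (Fin n → Bool)) (x : ObsGraph n) : ℝ :=
  (∑ η ∈ A, pri η * graphPMF p q η x) / (∑ η ∈ Theta n, pri η * graphPMF p q η x)

/-- `P_θ`-expectation of the posterior mass of `A`. -/
noncomputable def expPostMass {n : ℕ} (p q : ℝ) (pri : (Fin n → Bool) → ℝ)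
    (θ : Fin n → Bool) (A : Finset (Fin n → Bool)) : ℝ :=
  ∑ x : ObsGraph n, graphPMF p q θ x * postMass p q pri A x

/-- The uniform prior on `Θ_n`. -/
noncomputable def unifPrior (n : ℕ) : (Fin n → Bool) → ℝ := fun _ => ((2:ℝ) ^ (n - 1))⁻¹

/-- Hamming ball `B_n(θ,k)` inside `Θ_n`. -/
def hball {n : ℕ} (θ : Fin n → Bool) (k : ℕ) : Finset (Fin n → Bool) :=
  (Theta n).filter fun η => kdist η θ ≤ k

namespace Real

lemma sqrt_mul_le_half_add {a b : ℝ} (ha : 0 ≤ a) (hb : 0 ≤ b) : √(a * b) ≤ (a + b) / 2 :=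
  Real.sqrt_le_iff.2 ⟨by positivity, by nlinarith [sq_nonneg (a - b)]⟩

lemma mul_div_le_sqrt_mul {a b c : ℝ} (ha : 0 ≤ a) (hb : 0 ≤ b) (hc : a + b ≤ c) :
    a * b / c ≤ √(a * b) := by
  rcases ((add_nonneg ha hb).trans hc).eq_or_lt with hc0 | hc0
  · rw [← hc0, div_zero]
    exact Real.sqrt_nonneg _
  rw [div_le_iff₀ hc0]
  calc a * b = √(a * b) * √(a * b) := (Real.mul_self_sqrt (mul_nonneg ha hb)).symm
    _ ≤ √(a * b) * c := by
      gcongr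
      linarith [sqrt_mul_le_half_add ha hb]

end Real

section Posterior

variable {ι Ω : Type*} [Fintype Ω] {f : ι → Ω → ℝ} {s : Finset ι} {θ : ι}

lemma sum_mul_div_sum_le_one (hf : ∀ η ∈ s, ∀ x, 0 < f η x) (hθ : θ ∈ s)
    (h1 : ∑ x, f θ x = 1) : ∑ x, f θ x * (f θ x / ∑ η ∈ s, f η x) ≤ 1 := by
  rw [← h1]
  refine sum_le_sum fun x _ => mul_le_of_le_one_right (hf θ hθ x).le ?_
  exact div_le_one_of_le₀ (single_le_sum (fun η hη => (hf η hη x).le) hθ)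
    (sum_nonneg fun η hη => (hf η hη x).le)

lemma one_sub_sum_sqrt_le_sum_mul_div_sum [DecidableEq ι] (hf : ∀ η ∈ s, ∀ x, 0 < f η x)
    (hθ : θ ∈ s) (h1 : ∑ x, f θ x = 1) :
    1 - ∑ η ∈ s.erase θ, ∑ x, √(f θ x * f η x)
      ≤ ∑ x, f θ x * (f θ x / ∑ η ∈ s, f η x) := by
  have hD : ∀ x, 0 < ∑ η ∈ s, f η x := fun x => sum_pos (fun η hη => hf η hη x) ⟨θ, hθ⟩
  have hsplit : ∀ x, f θ x = f θ x * (f θ x / ∑ η ∈ s, f η x)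
      + ∑ η ∈ s.erase θ, f θ x * f η x / ∑ η ∈ s, f η x := by
    intro x
    rw [← sum_div, ← mul_sum, mul_div_assoc', ← add_div, ← mul_add,
      add_sum_erase s (fun η => f η x) hθ, mul_div_assoc, div_self (hD x).ne', mul_one]
  have hpair : ∀ η ∈ s.erase θ, ∀ x, f θ x + f η x ≤ ∑ η ∈ s, f η x := by
    intro η hη x
    obtain ⟨hne, hη⟩ := mem_erase.1 hη
    rw [← sum_pair (f := fun η => f η x) (Ne.symm hne)]
    exact sum_le_sum_of_subset_of_nonneg (insert_subset hθ (singleton_subset_iff.2 hη))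
      fun ξ hξ _ => (hf ξ hξ x).le
  calc 1 - ∑ η ∈ s.erase θ, ∑ x, √(f θ x * f η x)
      ≤ 1 - ∑ η ∈ s.erase θ, ∑ x, f θ x * f η x / ∑ η ∈ s, f η x := by
        gcongr with η hη x
        exact Real.mul_div_le_sqrt_mul (hf θ hθ x).le (hf η (mem_of_mem_erase hη) x).le
          (hpair η hη x)
    _ = ∑ x, f θ x * (f θ x / ∑ η ∈ s, f η x) := by
        rw [← h1, sum_comm, ← sum_sub_distrib]
        exact sum_congr rfl fun x _ => by linarith [hsplit x]

end Posterior

lemma sum_sqrt_prod_mul_prod {ι κ : Type*} [Fintype ι] [DecidableEq ι] [Fintype κ]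
    {f g : ι → κ → ℝ} (hf : ∀ i j, 0 ≤ f i j) (hg : ∀ i j, 0 ≤ g i j) :
    ∑ x : ι → κ, √((∏ i, f i (x i)) * ∏ i, g i (x i)) = ∏ i, ∑ j, √(f i j * g i j) := by
  rw [Fintype.prod_sum]
  refine sum_congr rfl fun x _ => ?_
  rw [← prod_mul_distrib, Real.sqrt_prod _ fun i _ => mul_nonneg (hf _ _) (hg _ _)]

lemma rho_comm (p q : ℝ) : rho p q = rho q p := by
  simp only [rho, mul_comm]

lemma rho_self {p : ℝ} (hp : p ∈ Set.Icc (0:ℝ) 1) : rho p p = 1 := by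
  rw [rho, Real.sqrt_mul_self hp.1, Real.sqrt_mul_self (sub_nonneg.2 hp.2)]
  ring

lemma rho_nonneg (p q : ℝ) : 0 ≤ rho p q := by
  unfold rho
  positivity

lemma rho_le_one {p q : ℝ} (hp : p ∈ Set.Icc (0:ℝ) 1) (hq : q ∈ Set.Icc (0:ℝ) 1) :
    rho p q ≤ 1 := by
  have h₁ := Real.sqrt_mul_le_half_add hp.1 hq.1
  have h₂ := Real.sqrt_mul_le_half_add (sub_nonneg.2 hp.2) (sub_nonneg.2 hq.2)
  rw [rho]
  linarith

section Graph

variable {n : ℕ} {p q : ℝ}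

-- the pairs of `D1 θ η ∪ D2 θ η`, as edges
def changedEdges (θ η : Fin n → Bool) : Finset (Edge n) :=
  univ.filter fun e => ¬((θ e.1.1 = θ e.1.2) ↔ (η e.1.1 = η e.1.2))

lemma edgeProb_mem_Icc (hp : p ∈ Set.Icc (0:ℝ) 1) (hq : q ∈ Set.Icc (0:ℝ) 1)
    (θ : Fin n → Bool) (e : Edge n) : edgeProb p q θ e ∈ Set.Icc (0:ℝ) 1 := by
  unfold edgeProb
  split_ifs <;> assumption

lemma rho_edgeProb (hp : p ∈ Set.Icc (0:ℝ) 1) (hq : q ∈ Set.Icc (0:ℝ) 1)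
    (θ η : Fin n → Bool) (e : Edge n) :
    rho (edgeProb p q θ e) (edgeProb p q η e) = if e ∈ changedEdges θ η then rho p q else 1 := by
  by_cases h₁ : θ e.1.1 = θ e.1.2 <;> by_cases h₂ : η e.1.1 = η e.1.2 <;>
    simp [edgeProb, changedEdges, h₁, h₂, rho_self hp, rho_self hq, rho_comm q p]

lemma graphPMF_pos (hp : p ∈ Set.Ioo (0:ℝ) 1) (hq : q ∈ Set.Ioo (0:ℝ) 1)
    (θ : Fin n → Bool) (x : ObsGraph n) : 0 < graphPMF p q θ x := by
  refine prod_pos fun e _ => ?_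
  have h : edgeProb p q θ e ∈ Set.Ioo (0:ℝ) 1 := by
    unfold edgeProb
    split_ifs <;> assumption
  split_ifs
  · exact h.1
  · linarith [h.2]

lemma sum_graphPMF (θ : Fin n → Bool) : ∑ x : ObsGraph n, graphPMF p q θ x = 1 := by
  unfold graphPMF
  refine (Fintype.prod_sum fun (e : Edge n) (b : Bool) =>
    if b then edgeProb p q θ e else 1 - edgeProb p q θ e).symm.trans ?_
  simp

lemma sum_sqrt_graphPMF_mul (hp : p ∈ Set.Icc (0:ℝ) 1) (hq : q ∈ Set.Icc (0:ℝ) 1)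
    (θ η : Fin n → Bool) :
    ∑ x : ObsGraph n, √(graphPMF p q θ x * graphPMF p q η x)
      = rho p q ^ #(changedEdges θ η) := by
  have hbern : ∀ (ξ : Fin n → Bool) (e : Edge n) (b : Bool),
      0 ≤ if b then edgeProb p q ξ e else 1 - edgeProb p q ξ e := by
    intro ξ e b
    have h := edgeProb_mem_Icc hp hq ξ e
    cases b
    · simpa using h.2
    · simpa using h.1
  unfold graphPMF
  rw [sum_sqrt_prod_mul_prod (hbern θ) (hbern η)]
  simp only [Fintype.sum_bool, if_true, Bool.false_eq_true, if_false]
  simp only [← rho.eq_1, rho_edgeProb hp hq, prod_ite_mem, univ_inter, prod_const]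

end Graph

section Combinatorics

variable {n : ℕ}

lemma hdist_le (θ η : Fin n → Bool) : hdist θ η ≤ n :=
  (card_filter_le _ _).trans_eq (card_fin n)

lemma hdist_mul_le_card_changedEdges (θ η : Fin n → Bool) :
    hdist θ η * (n - hdist θ η) ≤ #(changedEdges θ η) := by
  set S := univ.filter fun i : Fin n => θ i ≠ η i
  have hSc : #Sᶜ = n - hdist θ η := by rw [card_compl, Fintype.card_fin]; rfl
  rw [← hSc, show hdist θ η = #S from rfl, ← card_product]
  -- every vertex pair across the cut `(S, Sᶜ)` is an edge whose status changes
  refine card_le_card_of_surjOn (fun e => if e.1.1 ∈ S then e.1 else e.1.swap) ?_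
  rintro ⟨a, b⟩ hab
  simp only [coe_product, Set.mem_prod, mem_coe, mem_compl, S, mem_filter, mem_univ,
    true_and, not_not] at hab
  obtain ⟨ha, hb⟩ := hab
  have hne : a ≠ b := fun h => ha (h ▸ hb)
  rcases hne.lt_or_gt with hlt | hlt
  · refine ⟨⟨(a, b), hlt⟩, mem_coe.2 (mem_filter.2 ⟨mem_univ _, ?_⟩), by simp [S, ha]⟩
    revert ha hb
    cases θ a <;> cases η a <;> cases θ b <;> cases η b <;> decide
  · refine ⟨⟨(b, a), hlt⟩, mem_coe.2 (mem_filter.2 ⟨mem_univ _, ?_⟩), by simp [S, hb]⟩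
    revert ha hb
    cases θ a <;> cases η a <;> cases θ b <;> cases η b <;> decide

lemma min_mul_add_le (a b : ℕ) : min a b * (a + b) ≤ 2 * (a * b) := by
  rw [mul_add, two_mul]
  nth_rewrite 3 [mul_comm]
  exact add_le_add (Nat.mul_le_mul_right a (min_le_right a b))
    (Nat.mul_le_mul_right b (min_le_left a b))

lemma kdist_mul_le_card_changedEdges (θ η : Fin n → Bool) :
    kdist θ η * n ≤ 2 * #(changedEdges θ η) := by
  have h := min_mul_add_le (hdist θ η) (n - hdist θ η)
  rw [Nat.add_sub_cancel' (hdist_le θ η)] at h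
  exact h.trans (Nat.mul_le_mul_left 2 (hdist_mul_le_card_changedEdges θ η))

lemma rho_pow_card_changedEdges_le {p q : ℝ} (hp : p ∈ Set.Icc (0:ℝ) 1)
    (hq : q ∈ Set.Icc (0:ℝ) 1) (θ η : Fin n → Bool) :
    rho p q ^ #(changedEdges θ η) ≤ (rho p q ^ ((n : ℝ) / 2)) ^ kdist θ η := by
  rw [← Real.rpow_mul_natCast (rho_nonneg p q), ← Real.rpow_natCast]
  refine Real.rpow_le_rpow_of_exponent_ge' (rho_nonneg p q) (rho_le_one hp hq)
    (by positivity) ?_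
  have h : (kdist θ η : ℝ) * n ≤ 2 * #(changedEdges θ η) := by
    exact_mod_cast kdist_mul_le_card_changedEdges θ η
  linarith

lemma countOnes_add_countOnes {θ η : Fin n → Bool} (h : ∀ i, θ i ≠ η i) :
    countOnes θ + countOnes η = n := by
  have hη : (univ.filter fun i => η i = true) = univ.filter fun i => ¬θ i = true := by
    ext i
    simp only [mem_filter, mem_univ, true_and]
    have := h i
    revert this
    cases θ i <;> cases η i <;> decide
  rw [countOnes, countOnes, hη, card_filter_add_card_filter_not, card_univ, Fintype.card_fin]

lemma hdist_mem_Ico {θ η : Fin n → Bool} (hθ : θ ∈ Theta n) (hη : η ∈ (Theta n).erase θ) :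
    hdist θ η ∈ Ico 1 n := by
  obtain ⟨hne, hη⟩ := mem_erase.1 hη
  obtain ⟨i, hi⟩ := Function.ne_iff.1 hne
  refine mem_Ico.2 ⟨card_pos.2 ⟨i, mem_filter.2 ⟨mem_univ i, Ne.symm hi⟩⟩,
    (hdist_le θ η).lt_of_ne fun hn => ?_⟩
  -- `η` would be the complement of `θ`, so both communities have size `n / 2`
  -- and the labelling convention forces `θ 0 = η 0 = false`
  have hall : ∀ j, θ j ≠ η j := fun j =>
    (mem_filter.1 (eq_univ_iff_forall.1 (eq_univ_of_card _ (hn.trans (Fintype.card_fin n).symm))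
      j)).2
  have hsum := countOnes_add_countOnes hall
  obtain ⟨-, hθ₁, hθ₂⟩ := mem_filter.1 hθ
  obtain ⟨-, hη₁, hη₂⟩ := mem_filter.1 hη
  exact hall ⟨0, i.pos⟩ ((hθ₂ _ (by omega) rfl).trans (hη₂ _ (by omega) rfl).symm)

lemma card_filter_hdist_eq_le (θ : Fin n → Bool) (m : ℕ) :
    #(univ.filter fun η => hdist θ η = m) ≤ n.choose m := by
  calc #(univ.filter fun η => hdist θ η = m)
      ≤ #(powersetCard m (univ : Finset (Fin n))) := by
        refine card_le_card_of_injOn (fun η => univ.filter fun i => θ i ≠ η i)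
          (fun η hη => mem_powersetCard.2 ⟨filter_subset _ _, (mem_filter.1 hη).2⟩) ?_
        intro η₁ _ η₂ _ heq
        funext i
        have := Finset.ext_iff.1 heq i
        simp only [mem_filter, mem_univ, true_and] at this
        revert this
        cases θ i <;> cases η₁ i <;> cases η₂ i <;> decide
    _ = n.choose m := by rw [card_powersetCard, card_univ, Fintype.card_fin]

lemma choose_le_pow_min {n m : ℕ} (hm : m ≤ n) : n.choose m ≤ n ^ min m (n - m) := by
  rcases min_cases m (n - m) with ⟨h, -⟩ | ⟨h, -⟩ <;> rw [h]
  · exact Nat.choose_le_pow n m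
  · rw [← Nat.choose_symm hm]
    exact Nat.choose_le_pow n (n - m)

lemma sum_filter_hdist_eq_pow_kdist_le {r : ℝ} (hr : 0 ≤ r) (s : Finset (Fin n → Bool))
    (θ : Fin n → Bool) {m : ℕ} (hm : m ≤ n) :
    ∑ η ∈ s.filter (fun η => hdist θ η = m), r ^ kdist θ η ≤ (n * r) ^ min m (n - m) := by
  have hcard : (#(s.filter fun η => hdist θ η = m) : ℝ) ≤ (n : ℝ) ^ min m (n - m) := by
    have h := (card_le_card (filter_subset_filter _ (subset_univ s))).trans
      ((card_filter_hdist_eq_le θ m).trans (choose_le_pow_min hm))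
    exact_mod_cast h
  calc ∑ η ∈ s.filter (fun η => hdist θ η = m), r ^ kdist θ η
      = #(s.filter fun η => hdist θ η = m) * r ^ min m (n - m) := by
        rw [← nsmul_eq_mul, ← sum_const]
        exact sum_congr rfl fun η hη => by rw [kdist, (mem_filter.1 hη).2]
    _ ≤ (n * r) ^ min m (n - m) := by
        rw [mul_pow]
        gcongr

lemma sum_Ico_pow_min_le {ε : ℝ} (hε₀ : 0 ≤ ε) (hε : ε ≤ 1 / 2) (n : ℕ) :
    ∑ m ∈ Ico 1 n, ε ^ min m (n - m) ≤ 4 * ε := by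
  have hreflect : ∑ m ∈ Ico 1 n, ε ^ (n - m) = ∑ m ∈ Ico 1 n, ε ^ m :=
    sum_nbij' (fun m => n - m) (fun m => n - m) (by simp only [mem_Ico]; omega)
      (by simp only [mem_Ico]; omega) (by simp only [mem_Ico]; omega)
      (by simp only [mem_Ico]; omega) fun _ _ => rfl
  have hgeom : ε ^ 1 / (1 - ε) ≤ 2 * ε := by
    rw [div_le_iff₀ (by linarith)]
    nlinarith
  calc ∑ m ∈ Ico 1 n, ε ^ min m (n - m) ≤ ∑ m ∈ Ico 1 n, (ε ^ m + ε ^ (n - m)) := by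
        refine sum_le_sum fun m _ => ?_
        rcases min_choice m (n - m) with h | h <;> rw [h] <;> simp [pow_nonneg hε₀]
    _ = 2 * ∑ m ∈ Ico 1 n, ε ^ m := by rw [sum_add_distrib, hreflect, two_mul]
    _ ≤ 2 * (ε ^ 1 / (1 - ε)) := by
        gcongr
        exact geom_sum_Ico_le_of_lt_one hε₀ (by linarith)
    _ ≤ 4 * ε := by linarith

end Combinatorics

section Recovery

variable {n : ℕ} {p q : ℝ}

lemma sum_erase_rho_pow_card_changedEdges_le (hp : p ∈ Set.Icc (0:ℝ) 1)
    (hq : q ∈ Set.Icc (0:ℝ) 1) {θ : Fin n → Bool} (hθ : θ ∈ Theta n)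
    (hε : (n : ℝ) * rho p q ^ ((n : ℝ) / 2) ≤ 1 / 2) :
    ∑ η ∈ (Theta n).erase θ, rho p q ^ #(changedEdges θ η)
      ≤ 4 * ((n : ℝ) * rho p q ^ ((n : ℝ) / 2)) := by
  set r := rho p q ^ ((n : ℝ) / 2)
  have hr : 0 ≤ r := Real.rpow_nonneg (rho_nonneg p q) _
  calc ∑ η ∈ (Theta n).erase θ, rho p q ^ #(changedEdges θ η)
      ≤ ∑ η ∈ (Theta n).erase θ, r ^ kdist θ η :=
        sum_le_sum fun η _ => rho_pow_card_changedEdges_le hp hq θ η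
    _ = ∑ m ∈ Ico 1 n, ∑ η ∈ ((Theta n).erase θ).filter (fun η => hdist θ η = m),
          r ^ kdist θ η :=
        (sum_fiberwise_of_maps_to (fun η hη => hdist_mem_Ico hθ hη) _).symm
    _ ≤ ∑ m ∈ Ico 1 n, (n * r) ^ min m (n - m) :=
        sum_le_sum fun m hm =>
          sum_filter_hdist_eq_pow_kdist_le hr _ θ (mem_Ico.1 hm).2.le
    _ ≤ 4 * (n * r) := sum_Ico_pow_min_le (by positivity) hε n

lemma expPostMass_unifPrior_singleton (θ : Fin n → Bool) :
    expPostMass p q (unifPrior n) θ {θ} = ∑ x : ObsGraph n, graphPMF p q θ x *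
      (graphPMF p q θ x / ∑ η ∈ Theta n, graphPMF p q η x) := by
  have hc : ((2:ℝ) ^ (n - 1))⁻¹ ≠ 0 := by positivity
  simp only [expPostMass, postMass, unifPrior, sum_singleton, ← mul_sum,
    mul_div_mul_left _ _ hc]

lemma expPostMass_le_one (hp : p ∈ Set.Ioo (0:ℝ) 1) (hq : q ∈ Set.Ioo (0:ℝ) 1)
    {θ : Fin n → Bool} (hθ : θ ∈ Theta n) :
    expPostMass p q (unifPrior n) θ {θ} ≤ 1 := by
  rw [expPostMass_unifPrior_singleton]
  exact sum_mul_div_sum_le_one (fun η _ => graphPMF_pos hp hq η) hθ (sum_graphPMF θ)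

lemma one_sub_four_mul_le_expPostMass (hp : p ∈ Set.Ioo (0:ℝ) 1)
    (hq : q ∈ Set.Ioo (0:ℝ) 1) {θ : Fin n → Bool} (hθ : θ ∈ Theta n)
    (hε : (n : ℝ) * rho p q ^ ((n : ℝ) / 2) ≤ 1 / 2) :
    1 - 4 * ((n : ℝ) * rho p q ^ ((n : ℝ) / 2)) ≤ expPostMass p q (unifPrior n) θ {θ} := by
  have hp' := Set.Ioo_subset_Icc_self hp
  have hq' := Set.Ioo_subset_Icc_self hq
  have hbayes := one_sub_sum_sqrt_le_sum_mul_div_sum (fun η _ => graphPMF_pos hp hq η) hθ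
    (sum_graphPMF (p := p) (q := q) θ)
  simp only [sum_sqrt_graphPMF_mul hp' hq'] at hbayes
  rw [expPostMass_unifPrior_singleton]
  linarith [sum_erase_rho_pow_card_changedEdges_le hp' hq' hθ hε]

end Recovery

/-- if `n ρ(p_n,q_n)^{n/2} → 0` then the posterior recovers the true
community assignment exactly. -/
theorem stmt7 (p q : ℕ → ℝ) (hp : ∀ n, 2 ≤ n → p n ∈ Set.Ioo (0:ℝ) 1)
    (hq : ∀ n, 2 ≤ n → q n ∈ Set.Ioo (0:ℝ) 1)
    (θ : (n : ℕ) → Fin n → Bool) (hθ : ∀ n, 2 ≤ n → θ n ∈ Theta n)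
    (hcond : Filter.Tendsto (fun n : ℕ => (n : ℝ) * rho (p n) (q n) ^ ((n : ℝ) / 2))
      Filter.atTop (nhds 0)) :
    Filter.Tendsto (fun n : ℕ => expPostMass (p n) (q n) (unifPrior n) (θ n) {θ n})
      Filter.atTop (nhds 1) := by
  have hlower : Tendsto (fun n : ℕ => 1 - 4 * ((n : ℝ) * rho (p n) (q n) ^ ((n : ℝ) / 2)))
      atTop (nhds 1) := by
    simpa using (hcond.const_mul 4).const_sub 1
  refine tendsto_of_tendsto_of_tendsto_of_le_of_le' hlower tendsto_const_nhds ?_ ?_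
  · filter_upwards [hcond.eventually (eventually_le_nhds one_half_pos), eventually_ge_atTop 2]
      with n hε hn
    exact one_sub_four_mul_le_expPostMass (hp n hn) (hq n hn) (hθ n hn) hε
  · filter_upwards [eventually_ge_atTop 2] with n hn
    exact expPostMass_le_one (hp n hn) (hq n hn) (hθ n hn)
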